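/- arXiv:1203.4404 — 6 statements merged into one kernel-verified Lean document; each statement's English description precedes it below -/
import Mathlib

section
/- Let g ≥ 1 and let S_1 ≤ S_2 ≤ … ≤ S_g be positive integers, and set A_i := Σ_{k=1}^g min(S_i, S_k) for i = 1,…,g. For every real number L with L > 2·A_g, the g×g real matrix B defined by B_{ij} := (L − 2A_i)·δ_{ij} + 2·min(S_i, S_j) is symmetric and positive definite. -/
open Matrix Finset

/-!
Split `B = D + 2 M` with `D = diagonal (L - 2 A i)` and `M i j = min (S i) (S j)`. Since `S` is
monotone so is `A`, hence `L > 2 A_g` makes `D` positive definite. The min kernel `M` is a Gram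
matrix: for `0 ≤ a, b ≤ N` one has `min a b = ∑_{m < N} [m < a] [m < b]`, so `M = Cᵀ C` with
`C m i = [m < S i]`, which is positive semidefinite.
-/

theorem card_filter_lt_and_lt (N a b : ℕ) (ha : a ≤ N) :
    #{m ∈ range N | m < a ∧ m < b} = min a b := by
  rw [← Nat.card_Iio (min a b)]
  congr 1
  ext m
  simp only [mem_filter, mem_range, mem_Iio, lt_min_iff]
  omega

theorem posSemidef_min_natCast {ι : Type*} [Fintype ι] (n : ι → ℕ) :
    (of fun i j => (min (n i) (n j) : ℝ)).PosSemidef := by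
  let N := univ.sup n
  let C : Matrix (Fin N) ι ℝ := of fun m i => if (m : ℕ) < n i then 1 else 0
  have hgram : (of fun i j => (min (n i) (n j) : ℝ)) = Cᴴ * C := by
    ext i j
    simp only [of_apply, mul_apply, conjTranspose_apply, star_trivial, C, ite_zero_mul_ite_zero,
      mul_one]
    rw [Fin.sum_univ_eq_sum_range (fun m => if m < n i ∧ m < n j then (1 : ℝ) else 0),
      sum_boole, card_filter_lt_and_lt N _ _ (le_sup (mem_univ i))]
    push_cast
    rfl
  exact hgram ▸ posSemidef_conjTranspose_mul_self C

theorem posSemidef_min_intCast {ι : Type*} [Fintype ι] (s : ι → ℤ) (hs : ∀ i, 0 ≤ s i) :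
    (of fun i j => ((min (s i) (s j) : ℤ) : ℝ)).PosSemidef := by
  convert posSemidef_min_natCast (fun i => (s i).toNat) using 1
  ext i j
  simp only [of_apply, Int.cast_min, ← Int.cast_natCast (R := ℝ),
    Int.toNat_of_nonneg (hs _)]

theorem monotone_sum_min {ι κ α : Type*} [Preorder ι] [Fintype κ]
    [AddCommMonoid α] [LinearOrder α] [IsOrderedAddMonoid α] {S : ι → α} {T : κ → α}
    (hS : Monotone S) : Monotone fun i => ∑ k, min (S i) (T k) :=
  fun _ _ hij => sum_le_sum fun _ _ => min_le_min_right _ (hS hij)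

/-- For soliton lengths `S 0 ≤ ⋯ ≤ S (g-1)` (positive integers),
`A i := ∑ k, min (S i) (S k)`, and any real `L > 2 * A (last)`, the period matrix
`B i j = (L - 2 A i) δ_{ij} + 2 min (S i) (S j)` is symmetric and positive definite. -/
theorem stmt0 (g : ℕ) (hg : 1 ≤ g) (S : Fin g → ℤ)
    (hpos : ∀ i, 0 < S i) (hmono : Monotone S)
    (A : Fin g → ℤ) (hA : ∀ i, A i = ∑ k, min (S i) (S k))
    (L : ℝ) (hL : L > 2 * ((A ⟨g - 1, by omega⟩ : ℤ) : ℝ))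
    (B : Matrix (Fin g) (Fin g) ℝ)
    (hB : ∀ i j, B i j = (L - 2 * ((A i : ℤ) : ℝ)) * (if i = j then 1 else 0)
        + 2 * ((min (S i) (S j) : ℤ) : ℝ)) :
    B.IsSymm ∧ B.PosDef := by
  have hA_mono : Monotone A := by
    simpa only [← funext hA] using monotone_sum_min (T := S) hmono
  have hdiag : (diagonal fun i => L - 2 * (A i : ℝ)).PosDef := by
    refine posDef_diagonal_iff.2 fun i => ?_
    have : (A i : ℝ) ≤ A ⟨g - 1, by omega⟩ := Int.cast_le.2 (hA_mono (Fin.mk_le_mk.2 (by omega)))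
    linarith
  have hsplit : B = (diagonal fun i => L - 2 * (A i : ℝ))
      + (2 : ℝ) • of fun i j => ((min (S i) (S j) : ℤ) : ℝ) := by
    ext i j
    simp [hB, diagonal_apply]
  have hposdef : B.PosDef := hsplit ▸ hdiag.add_posSemidef
    ((posSemidef_min_intCast S fun i => (hpos i).le).smul zero_le_two)
  exact ⟨isHermitian_iff_isSymm.1 hposdef.isHermitian, hposdef⟩
end

section
/- Let B be a positive definite symmetric real g×g matrix. Then the tropical theta function Θ(·; B) is piecewise linear in the following sense: for every bounded subset K ⊂ ℝ^g there exists a finite set F ⊂ ℤ^g such that Θ(z; B) = min_{m ∈ F} [ (1/2)⟨m, B m⟩ + ⟨m, z⟩ ] for every z ∈ K. -/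
/-!
Outside a large enough box of lattice points, the quadratic part `(1/2)⟨m, B m⟩ ≥ (c/2)‖m‖²`
(by positive definiteness and compactness of the unit sphere) beats the linear part
`|⟨m, z⟩| ≤ g ‖m‖ ‖z‖` uniformly for `z ∈ K`, so every such term is at least the term `0` of
`m = 0`. Hence the infimum over `ℤ^g` is attained on the finitely many lattice points of the box.
-/

open scoped BigOperators

/-- The tropical theta function `Θ(z; B) = min_{m ∈ ℤ^g} [(1/2)⟨m, B m⟩ + ⟨m, z⟩]`,
defined as an infimum. -/
noncomputable def tropTheta (g : ℕ) (B : Matrix (Fin g) (Fin g) ℝ) (z : Fin g → ℝ) : ℝ :=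
  sInf {x : ℝ | ∃ m : Fin g → ℤ,
    x = (1/2) * ∑ i, (m i : ℝ) * (∑ j, B i j * (m j : ℝ)) + ∑ i, (m i : ℝ) * z i}

open Matrix

theorem Finset.isLeast_inf'_range {α β : Type*} [LinearOrder β] {s : Finset α}
    (hs : s.Nonempty) {f : α → β} (hf : ∀ a ∉ s, ∃ b ∈ s, f b ≤ f a) :
    IsLeast (Set.range f) (s.inf' hs f) := by
  obtain ⟨a, -, hmin⟩ := s.exists_mem_eq_inf' hs f
  refine ⟨⟨a, hmin.symm⟩, ?_⟩
  rintro _ ⟨a', rfl⟩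
  by_cases ha' : a' ∈ s
  · exact s.inf'_le f ha'
  · obtain ⟨b, hb, hba⟩ := hf a' ha'
    exact (s.inf'_le f hb).trans hba

theorem exists_pos_mul_norm_sq_le_of_homogeneous {E : Type*} [NormedAddCommGroup E]
    [NormedSpace ℝ E] [FiniteDimensional ℝ E] {Q : E → ℝ} (hcont : Continuous Q)
    (hsmul : ∀ (a : ℝ) x, Q (a • x) = a ^ 2 * Q x) (hpos : ∀ x ≠ 0, 0 < Q x) :
    ∃ c > 0, ∀ x, c * ‖x‖ ^ 2 ≤ Q x := by
  have hQ0 : Q 0 = 0 := by simpa using hsmul 0 0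
  rcases subsingleton_or_nontrivial E with _ | _
  · exact ⟨1, one_pos, fun x => by simp [Subsingleton.elim x 0, hQ0]⟩
  obtain ⟨u, hu, hmin⟩ := (isCompact_sphere (0 : E) 1).exists_isMinOn
    (NormedSpace.sphere_nonempty.mpr zero_le_one) hcont.continuousOn
  have hu0 : u ≠ 0 := ne_zero_of_mem_unit_sphere ⟨u, hu⟩
  refine ⟨Q u, hpos u hu0, fun x => ?_⟩
  rcases eq_or_ne x 0 with rfl | hx
  · simp [hQ0]
  have hnx : ‖x‖ ≠ 0 := norm_ne_zero_iff.mpr hx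
  have hsphere : ‖x‖⁻¹ • x ∈ Metric.sphere (0 : E) 1 := by
    simp [norm_smul, hnx]
  calc Q u * ‖x‖ ^ 2 ≤ Q (‖x‖⁻¹ • x) * ‖x‖ ^ 2 := by gcongr; exact hmin hsphere
    _ = Q x := by rw [mul_comm, ← hsmul, smul_inv_smul₀ hnx]

section

variable {ι : Type*} [Fintype ι]

noncomputable def tropThetaTerm (B : Matrix ι ι ℝ) (z : ι → ℝ) (m : ι → ℤ) : ℝ :=
  (1/2) * ((fun i => (m i : ℝ)) ⬝ᵥ B *ᵥ fun i => (m i : ℝ)) + (fun i => (m i : ℝ)) ⬝ᵥ z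

theorem Matrix.PosDef.exists_pos_mul_norm_sq_le {B : Matrix ι ι ℝ} (hB : B.PosDef) :
    ∃ c > 0, ∀ x : ι → ℝ, c * ‖x‖ ^ 2 ≤ x ⬝ᵥ B *ᵥ x := by
  refine exists_pos_mul_norm_sq_le_of_homogeneous
    (continuous_id.dotProduct (continuous_const.matrix_mulVec continuous_id)) ?_ ?_
  · intro a x
    rw [mulVec_smul, smul_dotProduct, dotProduct_smul, smul_eq_mul, smul_eq_mul]
    ring
  · intro x hx
    simpa using hB.dotProduct_mulVec_pos hx

theorem abs_dotProduct_le_card_mul_norm_mul_norm (x z : ι → ℝ) :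
    |x ⬝ᵥ z| ≤ Fintype.card ι * (‖x‖ * ‖z‖) := by
  calc |x ⬝ᵥ z| ≤ ∑ i, |x i * z i| := Finset.abs_sum_le_sum_abs _ _
    _ ≤ ∑ _i : ι, ‖x‖ * ‖z‖ := by
        refine Finset.sum_le_sum fun i _ => ?_
        rw [abs_mul]
        exact mul_le_mul (norm_le_pi_norm x i) (norm_le_pi_norm z i) (abs_nonneg _)
          (norm_nonneg _)
    _ = Fintype.card ι * (‖x‖ * ‖z‖) := by simp

theorem half_dotProduct_mulVec_add_dotProduct_nonneg {B : Matrix ι ι ℝ} {c R : ℝ}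
    (hB : ∀ x : ι → ℝ, c * ‖x‖ ^ 2 ≤ x ⬝ᵥ B *ᵥ x) {x z : ι → ℝ} (hz : ‖z‖ ≤ R)
    (hx : 2 * Fintype.card ι * R ≤ c * ‖x‖) :
    0 ≤ (1/2) * (x ⬝ᵥ B *ᵥ x) + x ⬝ᵥ z := by
  have hlin := neg_le_of_abs_le (abs_dotProduct_le_card_mul_norm_mul_norm x z)
  have hzR : Fintype.card ι * (‖x‖ * ‖z‖) ≤ Fintype.card ι * (‖x‖ * R) := by gcongr
  nlinarith [hB x, norm_nonneg x]

theorem lt_norm_intCast_of_notMem_Icc [DecidableEq ι] {N : ℕ} {m : ι → ℤ}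
    (hm : m ∉ Finset.Icc (fun _ => -(N : ℤ)) (fun _ => (N : ℤ))) :
    (N : ℝ) < ‖fun i => (m i : ℝ)‖ := by
  obtain ⟨i, hi⟩ : ∃ i, (N : ℤ) < |m i| := by
    by_contra! h
    exact hm (Finset.mem_Icc.mpr ⟨fun i => neg_le_of_abs_le (h i), fun i => le_of_abs_le (h i)⟩)
  calc (N : ℝ) < |(m i : ℝ)| := by exact_mod_cast hi
    _ ≤ ‖fun i => (m i : ℝ)‖ := norm_le_pi_norm (fun i => (m i : ℝ)) i

end

theorem tropTheta_eq_sInf_range (g : ℕ) (B : Matrix (Fin g) (Fin g) ℝ) (z : Fin g → ℝ) :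
    tropTheta g B z = sInf (Set.range (tropThetaTerm B z)) := by
  simp only [tropTheta, Set.range, eq_comm]
  rfl

/-- `Θ(·; B)` is piecewise linear: on every bounded subset `K ⊂ ℝ^g`
it coincides with a minimum over a finite set `F ⊂ ℤ^g` of the affine functions
`z ↦ (1/2)⟨m, B m⟩ + ⟨m, z⟩`. -/
theorem stmt4 (g : ℕ) (B : Matrix (Fin g) (Fin g) ℝ) (hB : B.PosDef)
    (K : Set (Fin g → ℝ)) (hK : Bornology.IsBounded K) :
    ∃ F : Finset (Fin g → ℤ), ∃ hF : F.Nonempty, ∀ z ∈ K,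
      tropTheta g B z = F.inf' hF (fun m =>
        (1/2) * ∑ i, (m i : ℝ) * (∑ j, B i j * (m j : ℝ)) + ∑ i, (m i : ℝ) * z i) := by
  obtain ⟨c, hc, hBc⟩ := hB.exists_pos_mul_norm_sq_le
  obtain ⟨R, hR⟩ := hK.exists_norm_le
  set N : ℕ := ⌈2 * g * R / c⌉₊
  have h0 : (0 : Fin g → ℤ) ∈ Finset.Icc (fun _ => -(N : ℤ)) (fun _ => (N : ℤ)) :=
    Finset.mem_Icc.mpr ⟨fun _ => by simp, fun _ => by simp⟩
  refine ⟨_, ⟨0, h0⟩, fun z hz => ?_⟩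
  rw [tropTheta_eq_sInf_range]
  refine (Finset.isLeast_inf'_range _ fun m hm => ⟨0, h0, ?_⟩).csInf_eq
  have hN : 2 * g * R ≤ c * ‖fun i => (m i : ℝ)‖ := by
    rw [← div_le_iff₀' hc]
    exact (Nat.le_ceil _).trans (lt_norm_intCast_of_notMem_Icc hm).le
  simpa [tropThetaTerm] using half_dotProduct_mulVec_add_dotProduct_nonneg hBc (hR z hz)
    (by simpa using hN)
end

section
/- Let B be a positive definite symmetric real g×g matrix, let e_i ∈ ℝ^g be the i-th standard basis vector, and let t ∈ ℝ. Then the tropical theta function satisfies Θ((1/2)B e_i + t e_i; B) − Θ((1/2)B e_i − t e_i; B) = −t. In particular, the piecewise linear function f(t) := Θ((1/2)B e_i + t e_i; B) has a break of odd weight at t = 0 (t = 0 is a zero of f of degree 1 when f has integer slopes). -/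
/-!
Write `z± = ½ B eᵢ ± t eᵢ`. The involution `m ↦ m' = -m - eᵢ` of `ℤ^g` satisfies
`½⟨m', B m'⟩ + ⟨m', z₋⟩ = ½⟨m, B m⟩ + ⟨m, z₊⟩ + t`, by symmetry of `B` and `⟨eᵢ, eᵢ⟩ = 1`,
so the two minimisations differ exactly by `t`. Positive definiteness makes both infima finite,
by completing the square.
-/

open scoped BigOperators

open Matrix

variable {n : Type*} [Fintype n]

noncomputable def thetaQuad (B : Matrix n n ℝ) (z x : n → ℝ) : ℝ :=
  (1 / 2) * (x ⬝ᵥ B *ᵥ x) + x ⬝ᵥ z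

theorem tropTheta_eq_iInf (g : ℕ) (B : Matrix (Fin g) (Fin g) ℝ) (z : Fin g → ℝ) :
    tropTheta g B z = ⨅ m : Fin g → ℤ, thetaQuad B z (fun a => (m a : ℝ)) := by
  rw [tropTheta, iInf, Set.range]
  congr 1
  ext x
  simp only [Set.mem_ofPred_eq, eq_comm (a := x), thetaQuad, dotProduct, mulVec]

theorem Matrix.IsSymm.dotProduct_mulVec_comm {R : Type*} [CommSemiring R] {B : Matrix n n R}
    (hB : B.IsSymm) (x y : n → R) : x ⬝ᵥ B *ᵥ y = y ⬝ᵥ B *ᵥ x := by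
  rw [dotProduct_mulVec, ← mulVec_transpose, hB.eq, dotProduct_comm]

theorem neg_half_le_thetaQuad_mulVec {B : Matrix n n ℝ} (hB : B.PosSemidef) (w x : n → ℝ) :
    -(1 / 2) * (w ⬝ᵥ B *ᵥ w) ≤ thetaQuad B (B *ᵥ w) x := by
  have hsymm : B.IsSymm := isHermitian_iff_isSymm.mp hB.isHermitian
  have hsq : 0 ≤ (x + w) ⬝ᵥ B *ᵥ (x + w) := by
    simpa using hB.dotProduct_mulVec_nonneg (x + w)
  have hexpand : (x + w) ⬝ᵥ B *ᵥ (x + w)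
      = x ⬝ᵥ B *ᵥ x + 2 * (x ⬝ᵥ B *ᵥ w) + w ⬝ᵥ B *ᵥ w := by
    simp only [mulVec_add, add_dotProduct, dotProduct_add, hsymm.dotProduct_mulVec_comm w x]
    ring
  rw [thetaQuad]
  linarith

theorem bddBelow_range_thetaQuad [DecidableEq n] {B : Matrix n n ℝ} (hB : B.PosDef)
    (z : n → ℝ) : BddBelow (Set.range (thetaQuad B z)) := by
  obtain ⟨w, rfl⟩ := mulVec_surjective_iff_isUnit.mpr hB.isUnit z
  exact ⟨_, Set.forall_mem_range.mpr (neg_half_le_thetaQuad_mulVec hB.posSemidef w)⟩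

theorem thetaQuad_neg_sub {B : Matrix n n ℝ} (hB : B.IsSymm) {e : n → ℝ} (he : e ⬝ᵥ e = 1)
    (s : ℝ) (x : n → ℝ) :
    thetaQuad B ((1 / 2 : ℝ) • B *ᵥ e - s • e) (-x - e)
      = thetaQuad B ((1 / 2 : ℝ) • B *ᵥ e + s • e) x + s := by
  simp only [thetaQuad, mulVec_sub, mulVec_neg, sub_dotProduct, neg_dotProduct, dotProduct_sub,
    dotProduct_add, dotProduct_neg, dotProduct_smul, smul_eq_mul, he,
    hB.dotProduct_mulVec_comm e x]
  ring

/-- at the half-period `(1/2) B e_i` the tropical theta function satisfies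
`Θ((1/2)B e_i + t e_i; B) - Θ((1/2)B e_i - t e_i; B) = -t` for all real `t`
(so `t = 0` is a zero of degree 1 of `t ↦ Θ((1/2)B e_i + t e_i; B)`). -/
theorem stmt7 (g : ℕ) (B : Matrix (Fin g) (Fin g) ℝ) (hB : B.PosDef)
    (i : Fin g) (t : ℝ)
    (e : Fin g → ℝ) (he : e = Pi.single i 1) :
    tropTheta g B ((1/2 : ℝ) • B.mulVec e + t • e)
      - tropTheta g B ((1/2 : ℝ) • B.mulVec e - t • e)
      = -t := by
  have hsymm : B.IsSymm := isHermitian_iff_isSymm.mp hB.isHermitian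
  have hunit : e ⬝ᵥ e = 1 := by simp [he]
  let σ : (Fin g → ℤ) ≃ (Fin g → ℤ) := (Equiv.neg _).trans (Equiv.subRight (Pi.single i 1))
  have hσ (m : Fin g → ℤ) : (fun a => (σ m a : ℝ)) = -(fun a => (m a : ℝ)) - e := by
    funext a
    simp [σ, he, Pi.single_apply]
  have hbdd := (bddBelow_range_thetaQuad hB ((1 / 2 : ℝ) • B *ᵥ e + t • e)).mono
    (Set.range_comp_subset_range (fun m : Fin g → ℤ => fun a => (m a : ℝ)) _)
  have hshift : ⨅ m : Fin g → ℤ, thetaQuad B ((1 / 2 : ℝ) • B *ᵥ e - t • e) (fun a => (m a : ℝ))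
      = (⨅ m : Fin g → ℤ, thetaQuad B ((1 / 2 : ℝ) • B *ᵥ e + t • e) (fun a => (m a : ℝ))) + t := by
    rw [← σ.iInf_comp]
    simp only [hσ, thetaQuad_neg_sub hsymm hunit]
    exact (ciInf_add hbdd t).symm
  rw [tropTheta_eq_iInf, tropTheta_eq_iInf, hshift]
  ring
end

section
/- Let S be a real symmetric g×g matrix, let w ∈ ℝ^g, and let e := (1,1,…,1) ∈ ℝ^g. Then there exists a real number L_0 such that for every real L > L_0: the infimum over r ∈ ℤ^g of (L/2)(⟨r, r⟩ + ⟨r, e⟩) + (1/2)⟨r, S r⟩ + ⟨r, w⟩ is attained, every minimizer lies in {−1, 0}^g, and this infimum equals min_{r ∈ {−1,0}^g} [ (1/2)⟨r, S r⟩ + ⟨r, w⟩ ]. -/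
open scoped BigOperators

/-- For an integer `a`, `|a| ≤ a² + a + something`... here: `|a| ≤ a^2`. -/
lemma int_abs_le_sq (a : ℤ) : |a| ≤ a ^ 2 := by
  rcases eq_or_ne a 0 with h | h
  · simp [h]
  · have h1 : 1 ≤ |a| := Int.one_le_abs h
    have : |a| * 1 ≤ |a| * |a| := by
      exact mul_le_mul_of_nonneg_left h1 (abs_nonneg a)
    calc |a| = |a| * 1 := (mul_one _).symm
      _ ≤ |a| * |a| := this
      _ = a ^ 2 := by rw [← abs_mul, ← sq, abs_sq]

lemma int_consec_nonneg (a : ℤ) : 0 ≤ a ^ 2 + a := by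
  rcases le_or_gt 0 a with h | h
  · positivity
  · nlinarith

lemma int_consec_big (a : ℤ) (h1 : a ≠ -1) (h0 : a ≠ 0) : 2 ≤ a ^ 2 + a := by
  rcases le_or_gt 1 a with h | h
  · nlinarith
  · have : a ≤ -2 := by omega
    nlinarith

/-- for a real symmetric `g×g` matrix `S` and `w ∈ ℝ^g` there is `L₀` such
that for all `L > L₀`, the infimum over `r ∈ ℤ^g` of
`(L/2)(⟨r,r⟩ + ⟨r,e⟩) + (1/2)⟨r,S r⟩ + ⟨r,w⟩` is attained, every minimizer lies in
`{-1,0}^g`, and the infimum equals `min_{r ∈ {-1,0}^g} [(1/2)⟨r,S r⟩ + ⟨r,w⟩]`. -/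
theorem stmt9 (g : ℕ) (S : Matrix (Fin g) (Fin g) ℝ) (hS : S.IsSymm)
    (w : Fin g → ℝ) :
    ∃ L₀ : ℝ, ∀ L : ℝ, L > L₀ →
      ∀ F : (Fin g → ℤ) → ℝ,
        (∀ r, F r = (L/2) * ((∑ i, (r i : ℝ) * (r i : ℝ)) + ∑ i, (r i : ℝ) * 1)
          + (1/2) * ∑ i, (r i : ℝ) * (∑ j, S i j * (r j : ℝ))
          + ∑ i, (r i : ℝ) * w i) →
        (∃ m : Fin g → ℤ, IsLeast (Set.range F) (F m)) ∧
        (∀ r : Fin g → ℤ, IsLeast (Set.range F) (F r) → ∀ i, r i = -1 ∨ r i = 0) ∧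
        IsLeast {y : ℝ | ∃ r : Fin g → ℤ, (∀ i, r i = -1 ∨ r i = 0) ∧
            y = (1/2) * ∑ i, (r i : ℝ) * (∑ j, S i j * (r j : ℝ)) + ∑ i, (r i : ℝ) * w i}
          (sInf (Set.range F)) := by
  classical
  -- the "finite" part of the energy
  set Q : (Fin g → ℤ) → ℝ := fun r =>
    (1/2) * ∑ i, (r i : ℝ) * (∑ j, S i j * (r j : ℝ)) + ∑ i, (r i : ℝ) * w i with hQdef
  -- constant controlling Q
  set C : ℝ := (1/2) * (∑ i, ∑ j, |S i j|) + ∑ i, |w i| with hCdef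
  have hC0 : 0 ≤ C := by
    have h1 : 0 ≤ ∑ i, ∑ j, |S i j| :=
      Finset.sum_nonneg fun i _ => Finset.sum_nonneg fun j _ => abs_nonneg _
    have h2 : 0 ≤ ∑ i, |w i| := Finset.sum_nonneg fun i _ => abs_nonneg _
    rw [hCdef]; linarith
  -- the box {-1,0}^g as a finset
  set B : Finset (Fin g → ℤ) := Fintype.piFinset fun _ => ({-1, 0} : Finset ℤ) with hBdef
  have hmemB : ∀ r : Fin g → ℤ, r ∈ B ↔ ∀ i, r i = -1 ∨ r i = 0 := by
    intro r
    simp [hBdef, Fintype.mem_piFinset]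
  have hBne : B.Nonempty := ⟨fun _ => 0, by simp [hmemB]⟩
  obtain ⟨r₀, hr₀B, hr₀min⟩ := B.exists_min_image Q hBne
  have hr₀box : ∀ i, r₀ i = -1 ∨ r₀ i = 0 := (hmemB r₀).1 hr₀B
  -- the bound |Q r| ≤ C * s where s = ∑ rᵢ²
  have hQbound : ∀ r : Fin g → ℤ, |Q r| ≤ C * ∑ i, (r i : ℝ) ^ 2 := by
    intro r
    set s : ℝ := ∑ i, (r i : ℝ) ^ 2 with hsdef
    have hs0 : 0 ≤ s := Finset.sum_nonneg fun i _ => sq_nonneg _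
    have hsq_le : ∀ i, (r i : ℝ) ^ 2 ≤ s := fun i =>
      Finset.single_le_sum (fun j _ => sq_nonneg ((r j : ℝ))) (Finset.mem_univ i)
    have habs_le : ∀ i, |(r i : ℝ)| ≤ s := by
      intro i
      have h1 : |r i| ≤ (r i) ^ 2 := int_abs_le_sq (r i)
      have h2 : |(r i : ℝ)| ≤ (r i : ℝ) ^ 2 := by exact_mod_cast h1
      exact h2.trans (hsq_le i)
    have hmul_le : ∀ i j, |(r i : ℝ)| * |(r j : ℝ)| ≤ s := by
      intro i j
      have hi := hsq_le i
      have hj := hsq_le j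
      nlinarith [sq_abs ((r i : ℝ)), sq_abs ((r j : ℝ)), sq_nonneg (|(r i : ℝ)| - |(r j : ℝ)|)]
    have hquad : |∑ i, (r i : ℝ) * (∑ j, S i j * (r j : ℝ))|
        ≤ (∑ i, ∑ j, |S i j|) * s := by
      calc |∑ i, (r i : ℝ) * (∑ j, S i j * (r j : ℝ))|
          ≤ ∑ i, |(r i : ℝ) * (∑ j, S i j * (r j : ℝ))| := Finset.abs_sum_le_sum_abs _ _
        _ ≤ ∑ i, ∑ j, |S i j| * s := by
            apply Finset.sum_le_sum
            intro i _
            calc |(r i : ℝ) * (∑ j, S i j * (r j : ℝ))|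
                = |(r i : ℝ)| * |∑ j, S i j * (r j : ℝ)| := abs_mul _ _
              _ ≤ |(r i : ℝ)| * ∑ j, |S i j * (r j : ℝ)| := by
                  apply mul_le_mul_of_nonneg_left (Finset.abs_sum_le_sum_abs _ _) (abs_nonneg _)
              _ = ∑ j, |(r i : ℝ)| * (|S i j| * |(r j : ℝ)|) := by
                  rw [Finset.mul_sum]
                  exact Finset.sum_congr rfl fun j _ => by rw [abs_mul]
              _ ≤ ∑ j, |S i j| * s := by
                  apply Finset.sum_le_sum
                  intro j _
                  have := hmul_le i j
                  have habsS : 0 ≤ |S i j| := abs_nonneg _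
                  calc |(r i : ℝ)| * (|S i j| * |(r j : ℝ)|)
                      = |S i j| * (|(r i : ℝ)| * |(r j : ℝ)|) := by ring
                    _ ≤ |S i j| * s := mul_le_mul_of_nonneg_left this habsS
        _ = (∑ i, ∑ j, |S i j|) * s := by
            rw [Finset.sum_mul]
            exact Finset.sum_congr rfl fun i _ => (Finset.sum_mul _ _ _).symm
    have hlin : |∑ i, (r i : ℝ) * w i| ≤ (∑ i, |w i|) * s := by
      calc |∑ i, (r i : ℝ) * w i| ≤ ∑ i, |(r i : ℝ) * w i| := Finset.abs_sum_le_sum_abs _ _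
        _ ≤ ∑ i, |w i| * s := by
            apply Finset.sum_le_sum
            intro i _
            rw [abs_mul]
            calc |(r i : ℝ)| * |w i| = |w i| * |(r i : ℝ)| := by ring
              _ ≤ |w i| * s := mul_le_mul_of_nonneg_left (habs_le i) (abs_nonneg _)
        _ = (∑ i, |w i|) * s := (Finset.sum_mul _ _ _).symm
    calc |Q r| ≤ (1/2) * |∑ i, (r i : ℝ) * (∑ j, S i j * (r j : ℝ))| + |∑ i, (r i : ℝ) * w i| := by
          rw [hQdef]
          refine (abs_add_le _ _).trans ?_
          rw [abs_mul, show |(1:ℝ)/2| = 1/2 from by norm_num]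
      _ ≤ (1/2) * ((∑ i, ∑ j, |S i j|) * s) + (∑ i, |w i|) * s := by
          have := hquad
          have := hlin
          nlinarith [hquad]
      _ = C * s := by rw [hCdef]; ring
  have hQeq : ∀ r : Fin g → ℤ, Q r
      = (1/2) * ∑ i, (r i : ℝ) * (∑ j, S i j * (r j : ℝ)) + ∑ i, (r i : ℝ) * w i :=
    fun r => rfl
  clear_value Q C B
  -- choose L₀
  refine ⟨4*C + 2*C*g + 2*|Q r₀| + 2, ?_⟩
  intro L hL F hF
  -- rewrite F
  have hN : ∀ r : Fin g → ℤ,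
      (∑ i, (r i : ℝ) * (r i : ℝ)) + ∑ i, (r i : ℝ) * 1
        = ∑ i, ((r i : ℝ) ^ 2 + (r i : ℝ)) := by
    intro r
    rw [Finset.sum_add_distrib]
    congr 1
    · exact Finset.sum_congr rfl fun i _ => (sq ((r i : ℝ))).symm ▸ by ring
    · exact Finset.sum_congr rfl fun i _ => mul_one _
  have hF' : ∀ r, F r = (L/2) * (∑ i, ((r i : ℝ) ^ 2 + (r i : ℝ))) + Q r := by
    intro r
    rw [hF r, hN r, hQeq r]
    ring
  -- N is nonneg
  have hNnonneg : ∀ r : Fin g → ℤ, 0 ≤ ∑ i, ((r i : ℝ) ^ 2 + (r i : ℝ)) := by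
    intro r
    apply Finset.sum_nonneg
    intro i _
    have := int_consec_nonneg (r i)
    exact_mod_cast this
  -- on the box, N = 0, hence F = Q
  have hFbox : ∀ r : Fin g → ℤ, (∀ i, r i = -1 ∨ r i = 0) → F r = Q r := by
    intro r hr
    rw [hF' r]
    have : ∑ i, ((r i : ℝ) ^ 2 + (r i : ℝ)) = 0 := by
      apply Finset.sum_eq_zero
      intro i _
      rcases hr i with h | h <;> simp [h]
    rw [this]; ring
  -- off the box, F > Q r₀
  have hFoff : ∀ r : Fin g → ℤ, ¬ (∀ i, r i = -1 ∨ r i = 0) → Q r₀ < F r := by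
    intro r hr
    push_neg at hr
    obtain ⟨i, hi1, hi0⟩ := hr
    set Nr : ℝ := ∑ i, ((r i : ℝ) ^ 2 + (r i : ℝ)) with hNrdef
    clear_value Nr
    have hNr1 : 1 ≤ Nr := by
      have h2 : (2 : ℝ) ≤ (r i : ℝ) ^ 2 + (r i : ℝ) := by
        exact_mod_cast int_consec_big (r i) hi1 hi0
      have hnn : ∀ j ∈ Finset.univ, (0:ℝ) ≤ (r j : ℝ) ^ 2 + (r j : ℝ) := by
        intro j _
        exact_mod_cast int_consec_nonneg (r j)
      have hle : (r i : ℝ) ^ 2 + (r i : ℝ) ≤ Nr := by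
        rw [hNrdef]
        exact Finset.single_le_sum hnn (Finset.mem_univ i)
      linarith
    -- s ≤ 2 Nr + g
    have hsle : ∑ i, (r i : ℝ) ^ 2 ≤ 2 * Nr + g := by
      have : ∑ i, (r i : ℝ) ^ 2 ≤ ∑ i, (2 * ((r i : ℝ) ^ 2 + (r i : ℝ)) + 1) := by
        apply Finset.sum_le_sum
        intro j _
        nlinarith [sq_nonneg ((r j : ℝ) + 1)]
      calc ∑ i, (r i : ℝ) ^ 2 ≤ ∑ i, (2 * ((r i : ℝ) ^ 2 + (r i : ℝ)) + 1) := this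
        _ = 2 * Nr + g := by
            rw [Finset.sum_add_distrib, ← Finset.mul_sum]
            simp [hNrdef]
    have hQr : -(C * (2 * Nr + g)) ≤ Q r := by
      have h1 := hQbound r
      have h2 : -(C * ∑ i, (r i : ℝ) ^ 2) ≤ Q r := neg_le_of_abs_le h1
      have h3 : C * ∑ i, (r i : ℝ) ^ 2 ≤ C * (2 * Nr + g) :=
        mul_le_mul_of_nonneg_left hsle hC0
      linarith
    rw [hF' r, ← hNrdef]
    have habs : Q r₀ ≤ |Q r₀| := le_abs_self _
    have habs0 : 0 ≤ |Q r₀| := abs_nonneg (Q r₀)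
    have hg0 : (0:ℝ) ≤ g := Nat.cast_nonneg g
    have hCg : 0 ≤ C * g := mul_nonneg hC0 hg0
    have hLC : 0 ≤ L/2 - 2*C := by nlinarith
    have hkey := mul_le_mul_of_nonneg_left hNr1 hLC
    nlinarith [hkey, hQr]
  -- F r₀ is the least element of the range
  have hleast : IsLeast (Set.range F) (F r₀) := by
    constructor
    · exact ⟨r₀, rfl⟩
    · rintro y ⟨r, rfl⟩
      by_cases hr : ∀ i, r i = -1 ∨ r i = 0
      · rw [hFbox r hr, hFbox r₀ hr₀box]
        exact hr₀min r ((hmemB r).2 hr)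
      · rw [hFbox r₀ hr₀box]
        exact le_of_lt (hFoff r hr)
  refine ⟨⟨r₀, hleast⟩, ?_, ?_⟩
  · intro r hr i
    by_contra hcon
    push_neg at hcon
    have hne : ¬ (∀ i, r i = -1 ∨ r i = 0) := by
      intro h
      rcases h i with h1 | h2
      · exact hcon.1 h1
      · exact hcon.2 h2
    have h1 : F r ≤ F r₀ := hr.2 ⟨r₀, rfl⟩
    have h2 : Q r₀ < F r := hFoff r hne
    rw [hFbox r₀ hr₀box] at h1
    linarith
  · have hsinf : sInf (Set.range F) = F r₀ := hleast.csInf_eq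
    rw [hsinf, hFbox r₀ hr₀box]
    constructor
    · exact ⟨r₀, hr₀box, hQeq r₀⟩
    · rintro y ⟨r, hr, rfl⟩
      rw [← hQeq r]
      exact hr₀min r ((hmemB r).2 hr)
end

section
/- Let S be a real symmetric g×g matrix, let w ∈ ℝ^g, let E be the g×g identity matrix, and let e := (1,1,…,1) ∈ ℝ^g. Then there exists L_0 > 0 such that for every real L > L_0 the matrix L·E + S is positive definite and Θ((L/2)e + w; L·E + S) = min_{r ∈ {0,1}^g} [ (1/2)⟨r, S r⟩ − ⟨r, w⟩ ]. In particular, lim_{L → +∞} Θ((L/2)e + w; L·E + S) exists and equals min_{r ∈ {0,1}^g} [ (1/2)⟨r, S r⟩ − ⟨r, w⟩ ]. -/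
/-!
Write `B = L·E + S` and `z = (L/2)e + w`. For `m ∈ ℤ^g` the theta summand splits as
`(L/2) ∑ mᵢ(mᵢ + 1) + [(1/2)⟨m, S m⟩ + ⟨m, w⟩]`. The first part is a nonnegative integer
multiple of `L/2`, vanishing exactly on `{0, -1}^g`, where `m = -r` turns the bracket into
`(1/2)⟨r, S r⟩ - ⟨r, w⟩`. Off `{0, -1}^g` we have `∑ mᵢ(mᵢ + 1) ≥ 2` and
`∑ mᵢ² ≤ 3 ∑ mᵢ(mᵢ + 1) + g`, while the bracket is bounded below by a constant multiple of
`∑ mᵢ²`; so once `L` is large these summands exceed the minimum over `{0, 1}^g`.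
-/

open scoped BigOperators Matrix

namespace Int

lemma mul_add_one_nonneg (n : ℤ) : 0 ≤ n * (n + 1) := by
  rcases le_or_gt 0 n with h | h <;> nlinarith

lemma two_le_mul_add_one {n : ℤ} (h₀ : n ≠ 0) (h₁ : n ≠ -1) : 2 ≤ n * (n + 1) := by
  rcases le_or_gt 1 n with h | h
  · nlinarith
  · have : n ≤ -2 := by omega
    nlinarith

lemma sq_le_three_mul_mul_add_one_add_one (n : ℤ) : n ^ 2 ≤ 3 * (n * (n + 1)) + 1 := by
  have : 0 ≤ (2 * n + 1) * (n + 1) := by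
    rcases le_or_gt 0 n with h | h <;> nlinarith
  nlinarith

end Int

section Estimates

variable {ι : Type*} [Fintype ι]

lemma two_le_sum_mul_add_one {m : ι → ℤ} (h : ∃ i, m i ≠ 0 ∧ m i ≠ -1) :
    2 ≤ ∑ i, (m i : ℝ) * (m i + 1) := by
  obtain ⟨i, h₀, h₁⟩ := h
  calc (2 : ℝ) ≤ (m i : ℝ) * (m i + 1) := by exact_mod_cast Int.two_le_mul_add_one h₀ h₁
    _ ≤ ∑ i, (m i : ℝ) * (m i + 1) :=
      Finset.single_le_sum (f := fun j => (m j : ℝ) * (m j + 1))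
        (fun j _ => by exact_mod_cast (m j).mul_add_one_nonneg) (Finset.mem_univ i)

lemma sum_mul_add_one_eq_zero {m : ι → ℤ} (h : ∀ i, m i = 0 ∨ m i = -1) :
    ∑ i, (m i : ℝ) * (m i + 1) = 0 :=
  Finset.sum_eq_zero fun i _ => by rcases h i with h | h <;> simp [h]

lemma sum_sq_le_three_mul_sum_mul_add_one_add_card (m : ι → ℤ) :
    ∑ i, (m i : ℝ) ^ 2 ≤ 3 * ∑ i, (m i : ℝ) * (m i + 1) + Fintype.card ι := by
  rw [Finset.mul_sum, Finset.card_univ.symm, Finset.cast_card, ← Finset.sum_add_distrib]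
  exact Finset.sum_le_sum fun i _ => by
    exact_mod_cast (m i).sq_le_three_mul_mul_add_one_add_one

lemma neg_mul_sum_sq_le_quadratic (S : Matrix ι ι ℝ) (v : ι → ℝ) :
    -((∑ i, ∑ j, |S i j|) * ∑ i, v i ^ 2) ≤ ∑ i, v i * ∑ j, S i j * v j := by
  have hsq : ∀ i, v i ^ 2 ≤ ∑ k, v k ^ 2 := fun i =>
    Finset.single_le_sum (fun k _ => sq_nonneg (v k)) (Finset.mem_univ i)
  have hprod : ∀ i j, |v i * v j| ≤ ∑ k, v k ^ 2 := fun i j => by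
    rw [abs_mul]
    nlinarith [sq_abs (v i), sq_abs (v j), hsq i, hsq j, sq_nonneg (|v i| - |v j|)]
  rw [Finset.sum_mul, ← Finset.sum_neg_distrib]
  refine Finset.sum_le_sum fun i _ => ?_
  rw [Finset.sum_mul, ← Finset.sum_neg_distrib, Finset.mul_sum]
  refine Finset.sum_le_sum fun j _ => ?_
  have : |v i * (S i j * v j)| ≤ |S i j| * ∑ k, v k ^ 2 := by
    rw [show v i * (S i j * v j) = S i j * (v i * v j) by ring, abs_mul]
    exact mul_le_mul_of_nonneg_left (hprod i j) (abs_nonneg _)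
  linarith [neg_abs_le (v i * (S i j * v j))]

lemma neg_mul_sum_sq_le_linear (w : ι → ℝ) (m : ι → ℤ) :
    -((∑ i, |w i|) * ∑ i, (m i : ℝ) ^ 2) ≤ ∑ i, (m i : ℝ) * w i := by
  rw [Finset.sum_mul, ← Finset.sum_neg_distrib]
  refine Finset.sum_le_sum fun i _ => ?_
  have habs : |(m i : ℝ)| ≤ ∑ k, (m k : ℝ) ^ 2 := by
    calc |(m i : ℝ)| ≤ (m i : ℝ) ^ 2 := by
          have := Int.natAbs_le_self_sq (m i)
          rw [Int.natCast_natAbs] at this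
          rw [← Int.cast_abs]
          exact_mod_cast this
      _ ≤ ∑ k, (m k : ℝ) ^ 2 :=
        Finset.single_le_sum (fun k _ => sq_nonneg (m k : ℝ)) (Finset.mem_univ i)
  have : |(m i : ℝ) * w i| ≤ |w i| * ∑ k, (m k : ℝ) ^ 2 := by
    rw [abs_mul, mul_comm]
    exact mul_le_mul_of_nonneg_left habs (abs_nonneg _)
  linarith [neg_abs_le ((m i : ℝ) * w i)]

end Estimates

lemma posDef_smul_one_add_of_sum_abs_lt {ι : Type*} [Fintype ι] [DecidableEq ι] {S : Matrix ι ι ℝ}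
    (hS : S.IsSymm) {L : ℝ} (hL : ∑ i, ∑ j, |S i j| < L) : (L • 1 + S).PosDef := by
  refine Matrix.posDef_iff_dotProduct_mulVec.mpr ⟨?_, fun x hx => ?_⟩
  · rw [Matrix.IsHermitian, Matrix.conjTranspose_eq_transpose_of_trivial, Matrix.transpose_add,
      Matrix.transpose_smul, Matrix.transpose_one, hS.eq]
  · have hx2 : 0 < ∑ i, x i ^ 2 := by
      obtain ⟨i, hi⟩ := Function.ne_iff.mp hx
      exact Finset.sum_pos' (fun j _ => sq_nonneg _) ⟨i, Finset.mem_univ i, sq_pos_of_ne_zero hi⟩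
    have hexpand : star x ⬝ᵥ (L • 1 + S) *ᵥ x = L * ∑ i, x i ^ 2 + ∑ i, x i * ∑ j, S i j * x j := by
      rw [star_trivial, Matrix.add_mulVec, dotProduct_add, Matrix.smul_mulVec, Matrix.one_mulVec,
        dotProduct_smul, smul_eq_mul]
      simp only [dotProduct, Matrix.mulVec, sq]
    rw [hexpand]
    nlinarith [neg_mul_sum_sq_le_quadratic S x]

lemma finite_setOf_forall_eq_zero_or_eq_one {ι : Type*} [Finite ι] :
    {r : ι → ℤ | ∀ i, r i = 0 ∨ r i = 1}.Finite := by
  simpa [Set.pi] using Set.Finite.pi (t := fun (_ : ι) => ({0, 1} : Set ℤ)) fun _ =>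
    Set.toFinite _

section TropicalTheta

variable {ι : Type*} [Fintype ι]

noncomputable def tropThetaSummand (B : Matrix ι ι ℝ) (z : ι → ℝ) (m : ι → ℤ) : ℝ :=
  (1/2) * ∑ i, (m i : ℝ) * (∑ j, B i j * (m j : ℝ)) + ∑ i, (m i : ℝ) * z i

lemma tropTheta_eq_of_isLeast {g : ℕ} {B : Matrix (Fin g) (Fin g) ℝ} {z : Fin g → ℝ} {M : ℝ}
    (h : IsLeast (Set.range (tropThetaSummand B z)) M) : tropTheta g B z = M := by
  rw [tropTheta, ← h.csInf_eq]
  congr 1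
  ext x
  exact exists_congr fun _ => eq_comm

lemma tropThetaSummand_neg (B : Matrix ι ι ℝ) (z : ι → ℝ) (m : ι → ℤ) :
    tropThetaSummand B z (-m) = tropThetaSummand B (-z) m := by
  simp [tropThetaSummand]

lemma tropThetaSummand_smul_one_add [DecidableEq ι] (L : ℝ) (S : Matrix ι ι ℝ) (w : ι → ℝ)
    (m : ι → ℤ) :
    tropThetaSummand (L • 1 + S) ((L / 2) • (fun _ => 1) + w) m =
      L / 2 * ∑ i, (m i : ℝ) * (m i + 1) + tropThetaSummand S w m := by
  have hrow : ∀ i, ∑ j, (L • 1 + S) i j * (m j : ℝ) = L * m i + ∑ j, S i j * (m j : ℝ) := by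
    simp [Matrix.add_apply, Matrix.one_apply, add_mul, Finset.sum_add_distrib]
  simp only [tropThetaSummand, hrow, Pi.add_apply, Pi.smul_apply, smul_eq_mul, mul_one,
    Finset.mul_sum, ← Finset.sum_add_distrib]
  refine Finset.sum_congr rfl fun i _ => ?_
  simp only [mul_add, Finset.mul_sum]
  ring

lemma neg_mul_sum_sq_le_tropThetaSummand (S : Matrix ι ι ℝ) (w : ι → ℝ) (m : ι → ℤ) :
    -(((∑ i, ∑ j, |S i j|) / 2 + ∑ i, |w i|) * ∑ i, (m i : ℝ) ^ 2) ≤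
      tropThetaSummand S w m := by
  have := neg_mul_sum_sq_le_quadratic S (fun i => (m i : ℝ))
  have := neg_mul_sum_sq_le_linear w m
  rw [tropThetaSummand]
  linarith

theorem isLeast_range_tropThetaSummand_smul_one_add [DecidableEq ι] {S : Matrix ι ι ℝ}
    {w : ι → ℝ} {M : ℝ} (hM : IsLeast (tropThetaSummand S (-w) '' {r | ∀ i, r i = 0 ∨ r i = 1}) M)
    {L : ℝ} (hL : (Fintype.card ι + 6) * ((∑ i, ∑ j, |S i j|) / 2 + ∑ i, |w i|) + |M| < L) :
    IsLeast (Set.range (tropThetaSummand (L • 1 + S) ((L / 2) • (fun _ => 1) + w))) M := by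
  refine ⟨?_, ?_⟩
  · obtain ⟨r, hr, rfl⟩ := hM.1
    refine ⟨-r, ?_⟩
    have hr' : ∀ i, (-r) i = 0 ∨ (-r) i = -1 := fun i => by rcases hr i with h | h <;> simp [h]
    rw [tropThetaSummand_smul_one_add, sum_mul_add_one_eq_zero hr', mul_zero, zero_add,
      tropThetaSummand_neg]
  rintro _ ⟨m, rfl⟩
  rw [tropThetaSummand_smul_one_add]
  by_cases hm : ∀ i, m i = 0 ∨ m i = -1
  · rw [sum_mul_add_one_eq_zero hm, mul_zero, zero_add, ← neg_neg m, tropThetaSummand_neg]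
    exact hM.2 ⟨-m, fun i => by rcases hm i with h | h <;> simp [h], rfl⟩
  push Not at hm
  have hA := two_le_sum_mul_add_one hm
  have hQ := sum_sq_le_three_mul_sum_mul_add_one_add_card m
  have hlow := neg_mul_sum_sq_le_tropThetaSummand S w m
  set K := (∑ i, ∑ j, |S i j|) / 2 + ∑ i, |w i|
  set A := ∑ i, (m i : ℝ) * (m i + 1)
  have hK : 0 ≤ K := by positivity
  have hL6 : 0 ≤ L / 2 - 3 * K := by nlinarith [abs_nonneg M]
  calc M ≤ |M| := le_abs_self M
    _ ≤ (L / 2 - 3 * K) * 2 - K * Fintype.card ι := by linarith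
    _ ≤ (L / 2 - 3 * K) * A - K * Fintype.card ι := by gcongr
    _ ≤ L / 2 * A - K * ∑ i, (m i : ℝ) ^ 2 := by nlinarith
    _ ≤ L / 2 * A + tropThetaSummand S w m := by linarith

end TropicalTheta

/-- for a real symmetric `g×g` matrix `S` and `w ∈ ℝ^g` there is `L₀ > 0`
such that for all `L > L₀` the matrix `L·E + S` is positive definite and
`Θ((L/2)e + w; L·E + S) = min_{r ∈ {0,1}^g} [(1/2)⟨r,S r⟩ - ⟨r,w⟩]`;
in particular `Θ((L/2)e + w; L·E + S)` tends to that minimum as `L → +∞`. -/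
theorem stmt11 (g : ℕ) (S : Matrix (Fin g) (Fin g) ℝ) (hS : S.IsSymm)
    (w : Fin g → ℝ) :
    ∃ M : ℝ,
      IsLeast {y : ℝ | ∃ r : Fin g → ℤ, (∀ i, r i = 0 ∨ r i = 1) ∧
          y = (1/2) * ∑ i, (r i : ℝ) * (∑ j, S i j * (r j : ℝ)) - ∑ i, (r i : ℝ) * w i} M ∧
      (∃ L₀ : ℝ, 0 < L₀ ∧ ∀ L : ℝ, L > L₀ →
        (L • (1 : Matrix (Fin g) (Fin g) ℝ) + S).PosDef ∧
        tropTheta g (L • (1 : Matrix (Fin g) (Fin g) ℝ) + S)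
          ((L/2) • (fun _ => (1 : ℝ)) + w) = M) ∧
      Filter.Tendsto
        (fun L : ℝ => tropTheta g (L • (1 : Matrix (Fin g) (Fin g) ℝ) + S)
          ((L/2) • (fun _ => (1 : ℝ)) + w))
        Filter.atTop (nhds M) := by
  set Z : Set (Fin g → ℤ) := {r | ∀ i, r i = 0 ∨ r i = 1}
  obtain ⟨M, hM⟩ : ∃ M, IsLeast (tropThetaSummand S (-w) '' Z) M :=
    (finite_setOf_forall_eq_zero_or_eq_one.image _).isCompact.exists_isLeast
      (Set.image_nonempty.2 ⟨0, fun _ => Or.inl rfl⟩)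
  have hset : {y : ℝ | ∃ r : Fin g → ℤ, (∀ i, r i = 0 ∨ r i = 1) ∧
      y = (1/2) * ∑ i, (r i : ℝ) * (∑ j, S i j * (r j : ℝ)) - ∑ i, (r i : ℝ) * w i} =
      tropThetaSummand S (-w) '' Z := by
    ext y
    simp [tropThetaSummand, Z, eq_comm, sub_eq_add_neg]
  have hC : 0 ≤ ∑ i, ∑ j, |S i j| := by positivity
  have hD : 0 ≤ ∑ i, |w i| := by positivity
  set K := (∑ i, ∑ j, |S i j|) / 2 + ∑ i, |w i| with hK
  have hgK : 0 ≤ g * K := by positivity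
  set L₀ := (g + 6) * K + |M| + 1
  have hθ : ∀ L > L₀, (L • (1 : Matrix (Fin g) (Fin g) ℝ) + S).PosDef ∧
      tropTheta g (L • 1 + S) ((L / 2) • (fun _ => 1) + w) = M := fun L hL =>
    ⟨posDef_smul_one_add_of_sum_abs_lt hS (by linarith [abs_nonneg M]),
      tropTheta_eq_of_isLeast <| isLeast_range_tropThetaSummand_smul_one_add hM <| by
        rw [Fintype.card_fin, ← hK]; linarith⟩
  refine ⟨M, hset ▸ hM, ⟨L₀, by positivity, hθ⟩, tendsto_const_nhds.congr' ?_⟩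
  filter_upwards [Filter.eventually_gt_atTop L₀] with L hL using (hθ L hL).2.symm
end

section
/- Let g ≥ 1, let S_1 ≤ S_2 ≤ … ≤ S_g be positive integers, set A_i := Σ_{k=1}^g min(S_i, S_k), let S be the g×g matrix with entries S_{ij} := −2A_i·δ_{ij} + 2·min(S_i, S_j), let s := (S_1, …, S_g) ∈ ℝ^g, let e := (1,…,1) ∈ ℝ^g, let c ∈ ℝ^g, and for n, t ∈ ℤ define T_n^t := min_{r ∈ {0,1}^g} [ (1/2)⟨r, S r⟩ − ⟨r, n·e − t·s + c⟩ ] and Ũ_n^t := T_n^t + T_{n+1}^{t+1} − T_{n+1}^t − T_n^{t+1}. Then for each fixed t ∈ ℤ there exists N ∈ ℤ such that Ũ_n^t = 0 whenever |n| ≥ N; i.e., the state Ũ^t has only finitely many nonzero entries. -/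
open scoped BigOperators

namespace Stmt14Aux

variable {g : ℕ}

noncomputable def qf (Smat : Matrix (Fin g) (Fin g) ℝ) (r : Fin g → ℤ) : ℝ :=
  (1/2) * ∑ i, (r i : ℝ) * (∑ j, Smat i j * (r j : ℝ))

noncomputable def Lf (S : Fin g → ℤ) (c : Fin g → ℝ) (t : ℤ) (r : Fin g → ℤ) : ℝ :=
  ∑ i, (r i : ℝ) * ((t : ℝ) * (S i : ℝ) - c i)

noncomputable def B1 (Smat : Matrix (Fin g) (Fin g) ℝ) : ℝ :=
  (1/2) * ∑ i, ∑ j, |Smat i j|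

noncomputable def B2 (S : Fin g → ℤ) (c : Fin g → ℝ) (t : ℤ) : ℝ :=
  ∑ i, |(t : ℝ) * (S i : ℝ) - c i|

lemma sum_expand (Smat : Matrix (Fin g) (Fin g) ℝ) (S : Fin g → ℤ) (c : Fin g → ℝ)
    (n t : ℤ) (r : Fin g → ℤ) :
    (1/2) * ∑ i, (r i : ℝ) * (∑ j, Smat i j * (r j : ℝ))
      - ∑ i, (r i : ℝ) * ((n : ℝ) * 1 - (t : ℝ) * ((S i : ℤ) : ℝ) + c i)
    = qf Smat r - (∑ i, (r i : ℝ)) * n + Lf S c t r := by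
  have h : ∑ i, (r i : ℝ) * ((n : ℝ) * 1 - (t : ℝ) * ((S i : ℤ) : ℝ) + c i)
      = (∑ i, (r i : ℝ)) * (n : ℝ) - Lf S c t r := by
    unfold Lf
    rw [Finset.sum_mul, ← Finset.sum_sub_distrib]
    exact Finset.sum_congr rfl fun i _ => by ring
  rw [h]; unfold qf; ring

lemma abs_qf_le (Smat : Matrix (Fin g) (Fin g) ℝ) (r : Fin g → ℤ)
    (hr : ∀ i, r i = 0 ∨ r i = 1) : |qf Smat r| ≤ B1 Smat := by
  have hri : ∀ i, |(r i : ℝ)| ≤ 1 := fun i => by rcases hr i with h | h <;> simp [h]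
  have h1 : |∑ i, (r i : ℝ) * (∑ j, Smat i j * (r j : ℝ))| ≤ ∑ i, ∑ j, |Smat i j| := by
    refine (Finset.abs_sum_le_sum_abs _ _).trans (Finset.sum_le_sum fun i _ => ?_)
    rw [abs_mul]
    have h2 : |∑ j, Smat i j * (r j : ℝ)| ≤ ∑ j, |Smat i j| := by
      refine (Finset.abs_sum_le_sum_abs _ _).trans (Finset.sum_le_sum fun j _ => ?_)
      rw [abs_mul]
      calc |Smat i j| * |(r j : ℝ)| ≤ |Smat i j| * 1 :=
            mul_le_mul_of_nonneg_left (hri j) (abs_nonneg _)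
        _ = |Smat i j| := mul_one _
    calc |(r i : ℝ)| * |∑ j, Smat i j * (r j : ℝ)| ≤ 1 * (∑ j, |Smat i j|) :=
          mul_le_mul (hri i) h2 (abs_nonneg _) zero_le_one
      _ = ∑ j, |Smat i j| := one_mul _
  unfold qf B1
  rw [abs_mul, abs_of_nonneg (by norm_num : (0:ℝ) ≤ 1/2)]
  nlinarith [abs_nonneg (∑ i, (r i : ℝ) * (∑ j, Smat i j * (r j : ℝ)))]

lemma abs_Lf_le (S : Fin g → ℤ) (c : Fin g → ℝ) (t : ℤ) (r : Fin g → ℤ)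
    (hr : ∀ i, r i = 0 ∨ r i = 1) : |Lf S c t r| ≤ B2 S c t := by
  have hri : ∀ i, |(r i : ℝ)| ≤ 1 := fun i => by rcases hr i with h | h <;> simp [h]
  unfold Lf B2
  refine (Finset.abs_sum_le_sum_abs _ _).trans (Finset.sum_le_sum fun i _ => ?_)
  rw [abs_mul]
  calc |(r i : ℝ)| * |(t : ℝ) * (S i : ℝ) - c i| ≤ 1 * |(t : ℝ) * (S i : ℝ) - c i| :=
        mul_le_mul_of_nonneg_right (hri i) (abs_nonneg _)
    _ = _ := one_mul _

end Stmt14Aux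

/-- the g-soliton solution
`Ũ n t = T n t + T (n+1) (t+1) - T (n+1) t - T n (t+1)` of the box and ball system has,
for each fixed time `t`, only finitely many nonzero entries: there is `N` with
`Ũ n t = 0` whenever `|n| ≥ N`. -/
theorem stmt14 (g : ℕ) (hg : 1 ≤ g) (S : Fin g → ℤ)
    (hpos : ∀ i, 0 < S i) (hmono : Monotone S)
    (A : Fin g → ℤ) (hA : ∀ i, A i = ∑ k, min (S i) (S k))
    (Smat : Matrix (Fin g) (Fin g) ℝ)
    (hSmat : ∀ i j, Smat i j = -2 * ((A i : ℤ) : ℝ) * (if i = j then 1 else 0)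
        + 2 * ((min (S i) (S j) : ℤ) : ℝ))
    (c : Fin g → ℝ)
    (T : ℤ → ℤ → ℝ)
    (hT : ∀ n t : ℤ, T n t = sInf {x : ℝ | ∃ r : Fin g → ℤ, (∀ i, r i = 0 ∨ r i = 1) ∧
        x = (1/2) * ∑ i, (r i : ℝ) * (∑ j, Smat i j * (r j : ℝ))
          - ∑ i, (r i : ℝ) * ((n : ℝ) * 1 - (t : ℝ) * ((S i : ℤ) : ℝ) + c i)})
    (U : ℤ → ℤ → ℝ)
    (hU : ∀ n t : ℤ, U n t = T n t + T (n+1) (t+1) - T (n+1) t - T n (t+1)) :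
    ∀ t : ℤ, ∃ N : ℤ, ∀ n : ℤ, N ≤ |n| → U n t = 0 := by
  classical
  intro t
  set B1 := Stmt14Aux.B1 Smat with hB1def
  set B2 : ℤ → ℝ := Stmt14Aux.B2 S c with hB2def
  have hB1 : 0 ≤ B1 := by
    rw [hB1def]; unfold Stmt14Aux.B1; positivity
  have hB2 : ∀ t' : ℤ, 0 ≤ B2 t' := by
    intro t'; rw [hB2def]; unfold Stmt14Aux.B2; positivity
  have hrho : ∀ r : Fin g → ℤ, (∀ i, r i = 0 ∨ r i = 1) →
      0 ≤ (∑ i, (r i : ℝ)) ∧ (∑ i, (r i : ℝ)) ≤ g := by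
    intro r hvr
    constructor
    · exact Finset.sum_nonneg fun i _ => by rcases hvr i with h | h <;> simp [h]
    · calc ∑ i, (r i : ℝ) ≤ ∑ _i : Fin g, (1 : ℝ) :=
            Finset.sum_le_sum fun i _ => by rcases hvr i with h | h <;> simp [h]
        _ = g := by simp
  -- bounded below
  have hbdd : ∀ n t' : ℤ, BddBelow {x : ℝ | ∃ r : Fin g → ℤ, (∀ i, r i = 0 ∨ r i = 1) ∧
      x = (1/2) * ∑ i, (r i : ℝ) * (∑ j, Smat i j * (r j : ℝ))
        - ∑ i, (r i : ℝ) * ((n : ℝ) * 1 - (t' : ℝ) * ((S i : ℤ) : ℝ) + c i)} := by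
    intro n t'
    refine ⟨-(B1 + (g : ℝ) * |(n : ℝ)| + B2 t'), ?_⟩
    rintro x ⟨r, hvr, rfl⟩
    rw [Stmt14Aux.sum_expand]
    obtain ⟨hρ0, hρg⟩ := hrho r hvr
    have hq := abs_le.mp (Stmt14Aux.abs_qf_le Smat r hvr)
    have hL := abs_le.mp (Stmt14Aux.abs_Lf_le S c t' r hvr)
    rw [← hB1def] at hq
    rw [← hB2def] at hL
    nlinarith [mul_le_mul_of_nonneg_left (le_abs_self (n : ℝ)) hρ0,
      mul_le_mul_of_nonneg_right hρg (abs_nonneg (n : ℝ))]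
  -- T vanishes for very negative n
  have Tneg : ∀ t' n : ℤ, (n : ℝ) ≤ -(B1 + B2 t') → T n t' = 0 := by
    intro t' n hn
    rw [hT]
    have h0mem : (0 : ℝ) ∈ {x : ℝ | ∃ r : Fin g → ℤ, (∀ i, r i = 0 ∨ r i = 1) ∧
        x = (1/2) * ∑ i, (r i : ℝ) * (∑ j, Smat i j * (r j : ℝ))
          - ∑ i, (r i : ℝ) * ((n : ℝ) * 1 - (t' : ℝ) * ((S i : ℤ) : ℝ) + c i)} :=
      ⟨fun _ => 0, fun _ => Or.inl rfl, by simp⟩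
    apply le_antisymm (csInf_le (hbdd n t') h0mem)
    apply le_csInf ⟨0, h0mem⟩
    rintro b ⟨r, hvr, rfl⟩
    rw [Stmt14Aux.sum_expand]
    have hq := abs_le.mp (Stmt14Aux.abs_qf_le Smat r hvr)
    have hL := abs_le.mp (Stmt14Aux.abs_Lf_le S c t' r hvr)
    rw [← hB1def] at hq
    rw [← hB2def] at hL
    by_cases hall : ∀ i, r i = 0
    · have hq0 : Stmt14Aux.qf Smat r = 0 := by unfold Stmt14Aux.qf; simp [hall]
      have hL0 : Stmt14Aux.Lf S c t' r = 0 := by unfold Stmt14Aux.Lf; simp [hall]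
      simp [hq0, hL0, hall]
    · push_neg at hall
      obtain ⟨i₀, hi₀⟩ := hall
      have hri₀ : r i₀ = 1 := (hvr i₀).resolve_left hi₀
      have hρ1 : (1 : ℝ) ≤ ∑ i, (r i : ℝ) := by
        have := Finset.single_le_sum (f := fun i => (r i : ℝ))
          (fun i _ => by rcases hvr i with h | h <;> simp [h]) (Finset.mem_univ i₀)
        simpa [hri₀] using this
      have hnn : 0 ≤ -(n : ℝ) := by linarith [hB2 t']
      nlinarith [mul_le_mul_of_nonneg_right hρ1 hnn]
  -- T is linear for very positive n
  have Tpos : ∀ t' n : ℤ, 2 * B1 + 2 * B2 t' + 1 ≤ (n : ℝ) →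
      T n t' = Stmt14Aux.qf Smat (fun _ => 1) - (g : ℝ) * n
        + Stmt14Aux.Lf S c t' (fun _ => 1) := by
    intro t' n hn
    rw [hT]
    have honev : ∀ i : Fin g, (fun _ : Fin g => (1:ℤ)) i = 0 ∨ (fun _ : Fin g => (1:ℤ)) i = 1 :=
      fun _ => Or.inr rfl
    have honemem : (Stmt14Aux.qf Smat (fun _ => 1) - (g : ℝ) * n
        + Stmt14Aux.Lf S c t' (fun _ => 1)) ∈ {x : ℝ | ∃ r : Fin g → ℤ,
          (∀ i, r i = 0 ∨ r i = 1) ∧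
        x = (1/2) * ∑ i, (r i : ℝ) * (∑ j, Smat i j * (r j : ℝ))
          - ∑ i, (r i : ℝ) * ((n : ℝ) * 1 - (t' : ℝ) * ((S i : ℤ) : ℝ) + c i)} := by
      refine ⟨fun _ => 1, honev, ?_⟩
      rw [Stmt14Aux.sum_expand]
      simp
    apply le_antisymm (csInf_le (hbdd n t') honemem)
    apply le_csInf ⟨_, honemem⟩
    rintro b ⟨r, hvr, rfl⟩
    rw [Stmt14Aux.sum_expand]
    by_cases hall : ∀ i, r i = 1
    · have : r = fun _ => 1 := funext hall
      rw [this]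
      simp
    · push_neg at hall
      obtain ⟨i₀, hi₀⟩ := hall
      have hri₀ : r i₀ = 0 := (hvr i₀).resolve_right hi₀
      have hρle : (∑ i, (r i : ℝ)) ≤ (g : ℝ) - 1 := by
        have h1 : ∑ i ∈ Finset.univ.erase i₀, (r i : ℝ) + (r i₀ : ℝ) = ∑ i, (r i : ℝ) :=
          Finset.sum_erase_add _ _ (Finset.mem_univ i₀)
        have h2 : ∑ i ∈ Finset.univ.erase i₀, (r i : ℝ)
            ≤ ∑ _i ∈ Finset.univ.erase i₀, (1 : ℝ) :=
          Finset.sum_le_sum fun i _ => by rcases hvr i with h | h <;> simp [h]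
        have h3 : ∑ _i ∈ Finset.univ.erase i₀, (1 : ℝ) = (g : ℝ) - 1 := by
          rw [Finset.sum_const, Finset.card_erase_of_mem (Finset.mem_univ i₀)]
          simp [Nat.cast_sub hg]
        rw [← h1, hri₀]
        push_cast
        linarith [h2.trans_eq h3]
      have hq := abs_le.mp (Stmt14Aux.abs_qf_le Smat r hvr)
      have hL := abs_le.mp (Stmt14Aux.abs_Lf_le S c t' r hvr)
      have hq1 := abs_le.mp (Stmt14Aux.abs_qf_le Smat (fun _ => 1) honev)
      have hL1 := abs_le.mp (Stmt14Aux.abs_Lf_le S c t' (fun _ => 1) honev)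
      rw [← hB1def] at hq hq1
      rw [← hB2def] at hL hL1
      obtain ⟨hρ0, hρg⟩ := hrho r hvr
      have hn0 : (0 : ℝ) ≤ (n : ℝ) := by linarith [hB2 t']
      nlinarith [mul_nonneg (by linarith : (0:ℝ) ≤ (g : ℝ) - 1 - ∑ i, (r i : ℝ)) hn0]
  -- conclusion
  set C : ℝ := 2 * B1 + 2 * B2 t + 2 * B2 (t + 1) with hCdef
  have hC0 : 0 ≤ C := by
    rw [hCdef]; linarith [hB2 t, hB2 (t+1)]
  refine ⟨⌈C⌉ + 1, ?_⟩
  intro n hn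
  have hceil : C ≤ (⌈C⌉ : ℝ) := Int.le_ceil C
  rcases le_or_gt 0 n with hn0 | hn0
  · have habs : |n| = n := abs_of_nonneg hn0
    rw [habs] at hn
    have hnR : C + 1 ≤ (n : ℝ) := by
      have : ((⌈C⌉ + 1 : ℤ) : ℝ) ≤ (n : ℝ) := by exact_mod_cast hn
      push_cast at this
      linarith
    have hn1R : C + 1 ≤ ((n + 1 : ℤ) : ℝ) := by push_cast; linarith
    have e1 := Tpos t n (by rw [hCdef] at hnR; linarith [hB2 (t+1)])
    have e2 := Tpos (t+1) (n+1) (by rw [hCdef] at hn1R; linarith [hB2 t])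
    have e3 := Tpos t (n+1) (by rw [hCdef] at hn1R; linarith [hB2 (t+1)])
    have e4 := Tpos (t+1) n (by rw [hCdef] at hnR; linarith [hB2 t])
    rw [hU, e1, e2, e3, e4]
    push_cast
    ring
  · have habs : |n| = -n := abs_of_neg hn0
    rw [habs] at hn
    have hnR : (n : ℝ) ≤ -(C + 1) := by
      have : (n : ℤ) ≤ -(⌈C⌉ + 1) := by linarith
      have h2 : (n : ℝ) ≤ ((-(⌈C⌉ + 1) : ℤ) : ℝ) := by exact_mod_cast this
      push_cast at h2
      linarith
    have hn1R : ((n + 1 : ℤ) : ℝ) ≤ -C := by push_cast; linarith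
    have e1 := Tneg t n (by rw [hCdef] at hnR; linarith [hB1, hB2 t, hB2 (t+1)])
    have e2 := Tneg (t+1) (n+1) (by rw [hCdef] at hn1R; linarith [hB1, hB2 t, hB2 (t+1)])
    have e3 := Tneg t (n+1) (by rw [hCdef] at hn1R; linarith [hB1, hB2 t, hB2 (t+1)])
    have e4 := Tneg (t+1) n (by rw [hCdef] at hnR; linarith [hB1, hB2 t, hB2 (t+1)])
    rw [hU, e1, e2, e3, e4]
    ring
end
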